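/- arXiv:2601.04868 — 5 statements merged into one kernel-verified Lean document; each statement's English description precedes it below -/
import Mathlib

section
/- Let q be a monotone Boolean query (a monotone Boolean function on subsets of a finite database D) and let ms_q(S) be the number of minimal supports of q contained in S (where a minimal support is a subset-minimal S ⊆ D with q(S) = true). Then for every fact α ∈ D, the Shapley value Sh(D, ms_q, α) equals the sum over all minimal supports S of q in D with α ∈ S of 1/|S|. -/
open Finset
open scoped Classical

variable {α : Type*} [Fintype α] [DecidableEq α]

/-- The set of elements preceding `a` in the linear ordering `σ`. -/
def Pred (σ : α ≃ Fin (Fintype.card α)) (a : α) : Finset α :=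
  Finset.univ.filter fun b => σ b < σ a

/-- The Shapley value of `a` w.r.t. the wealth function `ξ`: the average over all
linear orderings of the domain of the marginal contribution of `a`. -/
noncomputable def Sh (ξ : Finset α → ℝ) (a : α) : ℝ :=
  (∑ σ : α ≃ Fin (Fintype.card α), (ξ (insert a (Pred σ a)) - ξ (Pred σ a))) /
    (Fintype.card (α ≃ Fin (Fintype.card α)) : ℝ)

/-- `S` is a minimal support of the Boolean query `q`: it satisfies `q` and no
proper subset does. -/
def IsMinSupp (q : Finset α → Bool) (S : Finset α) : Prop :=
  q S = true ∧ ∀ T ⊂ S, q T = false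

/-- The MS wealth function: the number of minimal supports of `q` contained in `S`. -/
noncomputable def msCount (q : Finset α → Bool) (S : Finset α) : ℝ :=
  (((Finset.univ : Finset (Finset α)).filter fun M => IsMinSupp q M ∧ M ⊆ S).card : ℝ)

lemma sum_ind_max_eq (M : Finset α) (σ : α ≃ Fin (Fintype.card α)) (hM : M.Nonempty) :
    ∑ b ∈ M, (if ∀ c ∈ M, σ c ≤ σ b then (1 : ℝ) else 0) = 1 := by
  obtain ⟨b₀, hb₀, hmax⟩ := M.exists_max_image (fun c => σ c) hM
  rw [Finset.sum_eq_single_of_mem b₀ hb₀]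
  · exact if_pos hmax
  · intro b hb hne
    rw [if_neg]
    intro h
    exact hne (σ.injective (le_antisymm (hmax b hb) (h b₀ hb₀)))

lemma count_max (M : Finset α) (a : α) (ha : a ∈ M) :
    ∑ σ : α ≃ Fin (Fintype.card α), (if ∀ c ∈ M, σ c ≤ σ a then (1 : ℝ) else 0)
      = (Fintype.card (α ≃ Fin (Fintype.card α)) : ℝ) / M.card := by
  classical
  set f : α → ℝ := fun b =>
    ∑ σ : α ≃ Fin (Fintype.card α), (if ∀ c ∈ M, σ c ≤ σ b then (1 : ℝ) else 0) with hf
  have hsym : ∀ b ∈ M, f b = f a := by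
    intro b hb
    have := Equiv.sum_comp (((Equiv.swap a b).equivCongr (Equiv.refl (Fin (Fintype.card α)))))
      (fun σ : α ≃ Fin (Fintype.card α) => (if ∀ c ∈ M, σ c ≤ σ b then (1 : ℝ) else 0))
    show (∑ σ : α ≃ Fin (Fintype.card α), (if ∀ c ∈ M, σ c ≤ σ b then (1 : ℝ) else 0))
      = ∑ σ : α ≃ Fin (Fintype.card α), (if ∀ c ∈ M, σ c ≤ σ a then (1 : ℝ) else 0)
    rw [← this]
    apply Finset.sum_congr rfl
    intro σ _
    have hmem : ∀ c ∈ M, Equiv.swap a b c ∈ M := by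
      intro c hc
      rcases eq_or_ne c a with rfl | hca
      · simpa [Equiv.swap_apply_left] using hb
      rcases eq_or_ne c b with rfl | hcb
      · simpa [Equiv.swap_apply_right] using ha
      · simpa [Equiv.swap_apply_of_ne_of_ne hca hcb] using hc
    have happ : ∀ c, ((Equiv.swap a b).equivCongr (Equiv.refl (Fin (Fintype.card α))) σ) c
        = σ (Equiv.swap a b c) := by
      intro c
      simp [Equiv.equivCongr, Equiv.symm_swap]
    have hswap_b : Equiv.swap a b b = a := Equiv.swap_apply_right a b
    have hiff : (∀ c ∈ M, ((Equiv.swap a b).equivCongr (Equiv.refl (Fin (Fintype.card α))) σ) c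
          ≤ ((Equiv.swap a b).equivCongr (Equiv.refl (Fin (Fintype.card α))) σ) b)
        ↔ (∀ c ∈ M, σ c ≤ σ a) := by
      simp only [happ, hswap_b]
      constructor
      · intro h c hc
        have := h (Equiv.swap a b c) (hmem c hc)
        simpa using this
      · intro h c hc
        exact h _ (hmem c hc)
    rw [if_congr hiff rfl rfl]
  have htot : ∑ b ∈ M, f b = (Fintype.card (α ≃ Fin (Fintype.card α)) : ℝ) := by
    rw [hf]
    rw [Finset.sum_comm]
    rw [Finset.sum_congr rfl (fun σ _ => sum_ind_max_eq M σ ⟨a, ha⟩)]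
    simp [Finset.card_univ]
  have hconst : ∑ b ∈ M, f b = M.card * f a := by
    rw [Finset.sum_congr rfl hsym, Finset.sum_const, nsmul_eq_mul]
  have hMcard : (M.card : ℝ) ≠ 0 := by
    simp [Finset.card_ne_zero_of_mem ha]
  have : (M.card : ℝ) * f a = (Fintype.card (α ≃ Fin (Fintype.card α)) : ℝ) := by
    rw [← hconst, htot]
  have hgoal : f a = (Fintype.card (α ≃ Fin (Fintype.card α)) : ℝ) / M.card := by
    rw [eq_div_iff hMcard]
    linarith [this]
  exact hgoal

lemma marginal_eq (q : Finset α → Bool) (a : α) (P : Finset α) (haP : a ∉ P) :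
    msCount q (insert a P) - msCount q P =
      ∑ M ∈ (Finset.univ : Finset (Finset α)).filter (fun M => IsMinSupp q M ∧ a ∈ M),
        (if M ⊆ insert a P then (1 : ℝ) else 0) := by
  classical
  have h1 : msCount q (insert a P)
      = ∑ M : Finset α, (if IsMinSupp q M ∧ M ⊆ insert a P then (1 : ℝ) else 0) := by
    rw [msCount, Finset.sum_boole]
  have h2 : msCount q P
      = ∑ M : Finset α, (if IsMinSupp q M ∧ M ⊆ P then (1 : ℝ) else 0) := by
    rw [msCount, Finset.sum_boole]
  have h3 : ∑ M ∈ (Finset.univ : Finset (Finset α)).filter (fun M => IsMinSupp q M ∧ a ∈ M),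
        (if M ⊆ insert a P then (1 : ℝ) else 0)
      = ∑ M : Finset α, (if (IsMinSupp q M ∧ a ∈ M) ∧ M ⊆ insert a P then (1 : ℝ) else 0) := by
    rw [Finset.sum_filter]
    apply Finset.sum_congr rfl
    intro M _
    by_cases h : IsMinSupp q M ∧ a ∈ M <;> simp [h]
  rw [h1, h2, h3, ← Finset.sum_sub_distrib]
  apply Finset.sum_congr rfl
  intro M _
  by_cases hms : IsMinSupp q M
  · by_cases haM : a ∈ M
    · have hMP : ¬ M ⊆ P := fun h => haP (h haM)
      by_cases hMiP : M ⊆ insert a P <;> simp [hms, haM, hMP, hMiP]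
    · have : M ⊆ insert a P ↔ M ⊆ P := by
        constructor
        · intro h c hc
          rcases Finset.mem_insert.mp (h hc) with rfl | h'
          · exact absurd hc haM
          · exact h'
        · intro h; exact h.trans (Finset.subset_insert _ _)
      by_cases hMP : M ⊆ P <;> simp [hms, haM, this, hMP]
  · simp [hms]

lemma subset_insert_pred_iff (σ : α ≃ Fin (Fintype.card α)) (a : α) (M : Finset α)
    (ha : a ∈ M) : M ⊆ insert a (Pred σ a) ↔ ∀ c ∈ M, σ c ≤ σ a := by
  constructor
  · intro h c hc
    rcases Finset.mem_insert.mp (h hc) with rfl | h'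
    · exact le_refl _
    · exact le_of_lt (by simpa [Pred] using h')
  · intro h c hc
    rcases eq_or_ne c a with rfl | hca
    · exact Finset.mem_insert_self _ _
    · refine Finset.mem_insert_of_mem ?_
      simp only [Pred, Finset.mem_filter, Finset.mem_univ, true_and]
      exact lt_of_le_of_ne (h c hc) (fun he => hca (σ.injective he))

/-- The MS-Shapley value of a fact equals the sum of `1/|S|` over the minimal
supports `S` containing it. -/
theorem msShapley_eq_sum_inv_card (q : Finset α → Bool)
    (hmono : ∀ S T : Finset α, S ⊆ T → q S = true → q T = true) (a : α) :
    Sh (msCount q) a =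
      ∑ M ∈ (Finset.univ : Finset (Finset α)).filter
          (fun M => IsMinSupp q M ∧ a ∈ M), (1 : ℝ) / (M.card : ℝ) := by
  classical
  have hN : (0 : ℝ) < (Fintype.card (α ≃ Fin (Fintype.card α)) : ℝ) := by
    have : Nonempty (α ≃ Fin (Fintype.card α)) := ⟨Fintype.equivFin α⟩
    exact_mod_cast Fintype.card_pos
  have haP : ∀ σ : α ≃ Fin (Fintype.card α), a ∉ Pred σ a := by
    intro σ; simp [Pred]
  rw [Sh]
  rw [Finset.sum_congr rfl (fun σ _ => marginal_eq q a (Pred σ a) (haP σ))]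
  rw [Finset.sum_comm]
  have : ∀ M ∈ (Finset.univ : Finset (Finset α)).filter (fun M => IsMinSupp q M ∧ a ∈ M),
      ∑ σ : α ≃ Fin (Fintype.card α), (if M ⊆ insert a (Pred σ a) then (1 : ℝ) else 0)
        = (Fintype.card (α ≃ Fin (Fintype.card α)) : ℝ) / M.card := by
    intro M hM
    have haM : a ∈ M := (Finset.mem_filter.mp hM).2.2
    rw [← count_max M a haM]
    apply Finset.sum_congr rfl
    intro σ _
    by_cases h : M ⊆ insert a (Pred σ a)
    · rw [if_pos h, if_pos ((subset_insert_pred_iff σ a M haM).mp h)]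
    · rw [if_neg h, if_neg (fun hc => h ((subset_insert_pred_iff σ a M haM).mpr hc))]
  rw [Finset.sum_congr rfl this]
  rw [Finset.sum_div]
  apply Finset.sum_congr rfl
  intro M hM
  have haM : a ∈ M := (Finset.mem_filter.mp hM).2.2
  have hMcard : (M.card : ℝ) ≠ 0 := by
    simp [Finset.card_ne_zero_of_mem haM]
  field_simp
end

section
/- For signed facts: a positive fact +α belongs to some minimal signed support of q in D if and only if the Shapley value Sh(D±, ms_{q±}, +α) of the MS-Shapley measure is strictly positive, where ms_{q±}(S) counts minimal supports of the monotone query q± contained in S ⊆ D±. -/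
open Finset
open scoped Classical

variable {α : Type*} [Fintype α] [DecidableEq α]

lemma not_mem_Pred (σ : α ≃ Fin (Fintype.card α)) (a : α) : a ∉ Pred σ a := by
  simp [Pred]

lemma msCount_mono (q : Finset α → Bool) {S T : Finset α} (h : S ⊆ T) :
    msCount q S ≤ msCount q T := by
  unfold msCount
  have : ((Finset.univ : Finset (Finset α)).filter fun M => IsMinSupp q M ∧ M ⊆ S) ⊆
      ((Finset.univ : Finset (Finset α)).filter fun M => IsMinSupp q M ∧ M ⊆ T) := by
    intro M hM
    simp only [mem_filter, mem_univ, true_and] at *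
    exact ⟨hM.1, hM.2.trans h⟩
  exact_mod_cast Finset.card_le_card this

/-- A (signed) fact belongs to some minimal (signed) support iff its MS-Shapley
value is strictly positive. -/
theorem mem_minSupp_iff_msShapley_pos (q : Finset α → Bool)
    (hmono : ∀ S T : Finset α, S ⊆ T → q S = true → q T = true) (a : α) :
    (∃ M : Finset α, IsMinSupp q M ∧ a ∈ M) ↔ 0 < Sh (msCount q) a := by
  have hterm_nonneg : ∀ σ : α ≃ Fin (Fintype.card α),
      0 ≤ msCount q (insert a (Pred σ a)) - msCount q (Pred σ a) := fun σ =>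
    sub_nonneg.mpr (msCount_mono q (Finset.subset_insert a _))
  have hcardpos : 0 < (Fintype.card (α ≃ Fin (Fintype.card α)) : ℝ) := by
    have : Nonempty (α ≃ Fin (Fintype.card α)) := ⟨Fintype.equivFin α⟩
    exact_mod_cast Fintype.card_pos
  constructor
  · rintro ⟨M, hM, haM⟩
    -- build an ordering with `a` last
    have hn : 0 < Fintype.card α := Fintype.card_pos_iff.mpr ⟨a⟩
    let last : Fin (Fintype.card α) := ⟨Fintype.card α - 1, Nat.sub_lt hn one_pos⟩
    let e := Fintype.equivFin α
    let σ : α ≃ Fin (Fintype.card α) := e.trans (Equiv.swap (e a) last)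
    have hσa : σ a = last := by simp [σ, Equiv.swap_apply_left]
    have hMsub : M ⊆ insert a (Pred σ a) := by
      intro m hm
      by_cases hma : m = a
      · subst hma; exact mem_insert_self _ _
      · refine mem_insert_of_mem ?_
        simp only [Pred, mem_filter, mem_univ, true_and]
        have hne : σ m ≠ σ a := σ.injective.ne hma
        have hvne : (σ m).val ≠ (σ a).val := fun h => hne (Fin.val_injective h)
        have hle : (σ m).val ≤ Fintype.card α - 1 := Nat.le_pred_of_lt (σ m).isLt
        have : (σ m).val < (σ a).val := by
          rw [hσa]
          exact lt_of_le_of_ne hle (by rw [hσa] at hvne; exact hvne)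
        exact this
    -- term at σ is positive
    have hlt : msCount q (Pred σ a) < msCount q (insert a (Pred σ a)) := by
      unfold msCount
      have hss : ((Finset.univ : Finset (Finset α)).filter
            fun N => IsMinSupp q N ∧ N ⊆ Pred σ a) ⊂
          ((Finset.univ : Finset (Finset α)).filter
            fun N => IsMinSupp q N ∧ N ⊆ insert a (Pred σ a)) := by
        refine Finset.ssubset_iff_of_subset ?_ |>.mpr ?_
        · intro N hN
          simp only [mem_filter, mem_univ, true_and] at *
          exact ⟨hN.1, hN.2.trans (Finset.subset_insert a _)⟩
        · refine ⟨M, ?_, ?_⟩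
          · simp only [mem_filter, mem_univ, true_and]
            exact ⟨hM, hMsub⟩
          · simp only [mem_filter, mem_univ, true_and, not_and]
            intro _ hsub
            exact not_mem_Pred σ a (hsub haM)
      exact_mod_cast Finset.card_lt_card hss
    have hsum : 0 < ∑ σ : α ≃ Fin (Fintype.card α),
        (msCount q (insert a (Pred σ a)) - msCount q (Pred σ a)) := by
      refine Finset.sum_pos' (fun τ _ => hterm_nonneg τ) ⟨σ, Finset.mem_univ σ, ?_⟩
      exact sub_pos.mpr hlt
    exact div_pos hsum hcardpos
  · intro h
    by_contra hc
    push_neg at hc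
    have hzero : ∀ σ : α ≃ Fin (Fintype.card α),
        msCount q (insert a (Pred σ a)) - msCount q (Pred σ a) = 0 := by
      intro σ
      have : msCount q (insert a (Pred σ a)) = msCount q (Pred σ a) := by
        unfold msCount
        congr 2
        apply Finset.filter_congr
        intro N _
        constructor
        · rintro ⟨h1, h2⟩
          refine ⟨h1, fun x hx => ?_⟩
          rcases Finset.mem_insert.mp (h2 hx) with rfl | hxp
          · exact absurd hx (hc N h1)
          · exact hxp
        · rintro ⟨h1, h2⟩
          exact ⟨h1, h2.trans (Finset.subset_insert a _)⟩
      linarith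
    have : Sh (msCount q) a = 0 := by
      unfold Sh
      rw [Finset.sum_eq_zero fun σ _ => hzero σ, zero_div]
    linarith
end

section
/- For a monotone Boolean function q on subsets of a finite set D, with drastic wealth function dr_q(S) = 1 if q(S) = true and 0 otherwise: an element α ∈ D belongs to some minimal support of q in D if and only if Sh(D, dr_q, α) > 0. -/
open Finset
open scoped Classical

variable {α : Type*} [Fintype α] [DecidableEq α]

/-- For any set `B` not containing `a`, there is an ordering where exactly the
elements of `B` precede `a`. -/
lemma exists_pred_eq (a : α) (B : Finset α) (ha : a ∉ B) :
    ∃ σ : α ≃ Fin (Fintype.card α), Pred σ a = B := by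
  classical
  set l : List α := B.toList ++ a :: (Finset.univ \ insert a B).toList with hl
  have hmem : ∀ x : α, x ∈ l := by
    intro x
    by_cases hxB : x ∈ B
    · exact List.mem_append_left _ (by simpa using hxB)
    · by_cases hxa : x = a
      · exact List.mem_append_right _ (by simp [hxa])
      · refine List.mem_append_right _ (List.mem_cons_of_mem _ ?_)
        simp [hxa, hxB]
  have hnd : l.Nodup := by
    refine List.Nodup.append (Finset.nodup_toList B) ?_ ?_
    · refine List.Nodup.cons ?_ (Finset.nodup_toList _)
      simp
    · intro x hx1 hx2
      rcases List.mem_cons.1 hx2 with rfl | hx3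
      · exact ha (by simpa using hx1)
      · have : x ∈ Finset.univ \ insert a B := by simpa using hx3
        have : x ∉ B := by
          simp only [Finset.mem_sdiff, Finset.mem_insert] at this
          tauto
        exact this (by simpa using hx1)
  have hlen : l.length = Fintype.card α := by
    have := List.Nodup.length_le_card hnd
    have h2 : Fintype.card α ≤ l.length := by
      classical
      have : (Finset.univ : Finset α) ⊆ l.toFinset := fun x _ => List.mem_toFinset.2 (hmem x)
      calc Fintype.card α = (Finset.univ : Finset α).card := rfl
        _ ≤ l.toFinset.card := Finset.card_le_card this
        _ ≤ l.length := List.toFinset_card_le l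
    omega
  let e : Fin l.length ≃ α := hnd.getEquivOfForallMemList l hmem
  refine ⟨e.symm.trans (finCongr hlen), ?_⟩
  have hidx : ∀ x : α, ((e.symm.trans (finCongr hlen)) x : ℕ) = l.idxOf x := by
    intro x; rfl
  have hia : l.idxOf a = B.toList.length := by
    rw [hl, List.idxOf_append_of_notMem (by simpa using ha)]
    simp
  ext b
  simp only [Pred, Finset.mem_filter, Finset.mem_univ, true_and, Fin.lt_def, hidx, hia]
  constructor
  · intro hlt
    by_contra hbB
    have hba : b ≠ a := by
      rintro rfl; rw [hia] at hlt; omega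
    have : l.idxOf b = B.toList.length + (a :: (Finset.univ \ insert a B).toList).idxOf b := by
      rw [hl, List.idxOf_append_of_notMem (by simpa using hbB)]
    omega
  · intro hbB
    have : l.idxOf b = B.toList.idxOf b := by
      rw [hl, List.idxOf_append_of_mem (by simpa using hbB)]
    rw [this]
    exact List.idxOf_lt_length_iff.2 (by simpa using hbB)

/-- An element belongs to some minimal support of the monotone query `q` iff its
drastic-Shapley value is strictly positive. -/
theorem mem_minSupp_iff_drShapley_pos (q : Finset α → Bool)
    (hmono : ∀ S T : Finset α, S ⊆ T → q S = true → q T = true) (a : α) :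
    (∃ M : Finset α, IsMinSupp q M ∧ a ∈ M) ↔
      0 < Sh (fun S => if q S = true then (1 : ℝ) else 0) a := by
  classical
  set ξ : Finset α → ℝ := fun S => if q S = true then (1 : ℝ) else 0 with hξ
  have hterm_nonneg : ∀ σ : α ≃ Fin (Fintype.card α),
      0 ≤ ξ (insert a (Pred σ a)) - ξ (Pred σ a) := by
    intro σ
    by_cases h : q (Pred σ a) = true
    · have h2 : q (insert a (Pred σ a)) = true :=
        hmono _ _ (Finset.subset_insert _ _) h
      simp [hξ, h, h2]
    · by_cases h2 : q (insert a (Pred σ a)) = true <;> simp [hξ, h, h2]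
  have hcardpos : 0 < (Fintype.card (α ≃ Fin (Fintype.card α)) : ℝ) := by
    have : Nonempty (α ≃ Fin (Fintype.card α)) := ⟨Fintype.equivFin α⟩
    exact_mod_cast Fintype.card_pos
  constructor
  · rintro ⟨M, ⟨hqM, hmin⟩, haM⟩
    obtain ⟨σ, hσ⟩ := exists_pred_eq a (M.erase a) (Finset.notMem_erase a M)
    have hqP : q (Pred σ a) = false := by
      rw [hσ]
      exact hmin _ (Finset.erase_ssubset haM)
    have hqI : q (insert a (Pred σ a)) = true := by
      rw [hσ, Finset.insert_erase haM]; exact hqM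
    have hterm : ξ (insert a (Pred σ a)) - ξ (Pred σ a) = 1 := by
      simp [hξ, hqI, hqP]
    have hsum : (1 : ℝ) ≤ ∑ τ : α ≃ Fin (Fintype.card α),
        (ξ (insert a (Pred τ a)) - ξ (Pred τ a)) := by
      rw [← hterm]
      exact Finset.single_le_sum (fun τ _ => hterm_nonneg τ) (Finset.mem_univ σ)
    exact div_pos (lt_of_lt_of_le one_pos hsum) hcardpos
  · intro hpos
    have hsum : 0 < ∑ τ : α ≃ Fin (Fintype.card α),
        (ξ (insert a (Pred τ a)) - ξ (Pred τ a)) := by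
      by_contra h
      push_neg at h
      have : Sh ξ a ≤ 0 := div_nonpos_of_nonpos_of_nonneg h hcardpos.le
      exact absurd hpos (not_lt.2 this)
    obtain ⟨σ, -, hσ⟩ : ∃ σ ∈ (Finset.univ : Finset (α ≃ Fin (Fintype.card α))),
        0 < ξ (insert a (Pred σ a)) - ξ (Pred σ a) := by
      by_contra h
      push_neg at h
      have : ∑ τ : α ≃ Fin (Fintype.card α),
          (ξ (insert a (Pred τ a)) - ξ (Pred τ a)) ≤ 0 := by
        apply Finset.sum_nonpos
        intro τ _
        exact h τ (Finset.mem_univ τ)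
      linarith
    -- from the positive term, extract q values
    have hqP : q (Pred σ a) = false := by
      by_contra h
      have h' : q (Pred σ a) = true := by
        cases hq : q (Pred σ a) <;> simp_all
      have h2 : q (insert a (Pred σ a)) = true :=
        hmono _ _ (Finset.subset_insert _ _) h'
      simp [hξ, h', h2] at hσ
    have hqI : q (insert a (Pred σ a)) = true := by
      by_contra h
      have h' : q (insert a (Pred σ a)) = false := by
        cases hq : q (insert a (Pred σ a)) <;> simp_all
      simp [hξ, h', hqP] at hσ
    -- find a minimal-cardinality support inside `insert a (Pred σ a)` containing `a`
    set P := Pred σ a with hP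
    have haP : a ∉ P := by simp [hP, Pred]
    set 𝒮 : Finset (Finset α) :=
      (Finset.univ : Finset (Finset α)).filter
        (fun S => a ∈ S ∧ q S = true ∧ S ⊆ insert a P) with h𝒮
    have hne : 𝒮.Nonempty := ⟨insert a P, by simp [h𝒮, hqI]⟩
    obtain ⟨M, hM𝒮, hMmin⟩ := Finset.exists_min_image 𝒮 Finset.card hne
    simp only [h𝒮, Finset.mem_filter, Finset.mem_univ, true_and] at hM𝒮
    obtain ⟨haM, hqM, hMsub⟩ := hM𝒮
    refine ⟨M, ⟨hqM, ?_⟩, haM⟩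
    intro T hT
    by_contra h
    have hqT : q T = true := by cases hq : q T <;> simp_all
    by_cases haT : a ∈ T
    · have hT𝒮 : T ∈ 𝒮 := by
        simp only [h𝒮, Finset.mem_filter, Finset.mem_univ, true_and]
        exact ⟨haT, hqT, hT.subset.trans hMsub⟩
      have := hMmin T hT𝒮
      have := Finset.card_lt_card hT
      omega
    · have hTP : T ⊆ P := by
        intro x hx
        have hxM : x ∈ M := hT.subset hx
        have := hMsub hxM
        rcases Finset.mem_insert.1 this with rfl | hxP
        · exact absurd hx haT
        · exact hxP
      have : q P = true := hmono _ _ hTP hqT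
      simp_all
end

section
/- If α ∈ D does not belong to any minimal support of a monotone Boolean function q on subsets of a finite set D, then for every subset S ⊆ D, q(S) = q(S \ {α}). -/
open Finset

variable {α : Type*} [Fintype α] [DecidableEq α]

lemma exists_minSupp_subset (q : Finset α → Bool) (S : Finset α) (hS : q S = true) :
    ∃ M ⊆ S, IsMinSupp q M := by
  induction S using Finset.strongInduction with
  | _ S ih =>
    by_cases hmin : ∀ T ⊂ S, q T = false
    · exact ⟨S, subset_rfl, hS, hmin⟩
    · push_neg at hmin
      obtain ⟨T, hTS, hT⟩ := hmin
      obtain ⟨M, hMT, hM⟩ := ih T hTS (by simpa using hT)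
      exact ⟨M, hMT.trans hTS.subset, hM⟩

/-- If `a` belongs to no minimal support of the monotone query `q`, then `q`
takes the same value on `S` and `S \ {a}` for every `S`. -/
theorem not_mem_minSupp_irrelevant (q : Finset α → Bool)
    (hmono : ∀ S T : Finset α, S ⊆ T → q S = true → q T = true)
    (a : α) (h : ¬ ∃ M : Finset α, IsMinSupp q M ∧ a ∈ M) :
    ∀ S : Finset α, q S = q (S.erase a) := by
  intro S
  push_neg at h
  cases hq : q (S.erase a) with
  | true => exact hmono _ _ (erase_subset _ _) hq
  | false =>
    by_contra hne
    have hS : q S = true := by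
      cases hqs : q S
      · simp [hqs, hq] at hne
      · rfl
    obtain ⟨M, hMS, hM⟩ := exists_minSupp_subset q S hS
    have haM : a ∉ M := h M hM
    have : M ⊆ S.erase a := fun x hx =>
      mem_erase.mpr ⟨fun hxa => haM (hxa ▸ hx), hMS hx⟩
    have := hmono M _ this hM.1
    simp [this] at hq
end

section
/- For the query q = ∃x,y. A(x) ∧ R(x,y) ∧ ¬A(y) and the chain databases D_n = {A(c_i) : 0 ≤ i < n} ∪ {R(c_i, c_{i+1}) : 0 ≤ i < n} with constants c_0, …, c_n, the set S_n = {+A(c_0), −A(c_n)} ∪ {+R(c_i,c_{i+1}) : 0 ≤ i < n} has the property that every database D' containing all positive facts of S_n and no fact of the negative part of S_n satisfies q. Hence under entailment semantics arbitrarily large 'minimal supports' exist. -/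
/-- Facts over natural-number constants `c_i`: `A i` is `Sum.inl i`,
`R i j` is `Sum.inr (i, j)`. -/
abbrev DBFact := ℕ ⊕ ℕ × ℕ

def A (i : ℕ) : DBFact := Sum.inl i
def R (i j : ℕ) : DBFact := Sum.inr (i, j)

/-- `D'` satisfies q = ∃x,y. A(x) ∧ R(x,y) ∧ ¬A(y). -/
def Sat (D' : Set DBFact) : Prop :=
  ∃ x y : ℕ, A x ∈ D' ∧ R x y ∈ D' ∧ A y ∉ D'

/-- For the chain databases: every database containing the positive part
{A(c₀)} ∪ {R(cᵢ,cᵢ₊₁) : i < n} of Sₙ and avoiding its negative part {A(cₙ)}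
satisfies q. Hence entailment semantics yields arbitrarily large minimal
supports. -/
theorem chain_entailment (n : ℕ) (hn : 1 ≤ n) (D' : Set DBFact)
    (h0 : A 0 ∈ D') (hR : ∀ i < n, R i (i + 1) ∈ D') (hn' : A n ∉ D') :
    Sat D' := by
  by_contra hns
  have key : ∀ i ≤ n, A i ∈ D' := by
    intro i
    induction i with
    | zero => intro _; exact h0
    | succ k ih =>
      intro hk
      have hkn : k < n := Nat.lt_of_succ_le hk
      have hAk := ih (le_of_lt hkn)
      by_contra hA
      exact hns ⟨k, k+1, hAk, hR k hkn, hA⟩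
  exact hn' (key n le_rfl)
end
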